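/- Let ζ = 54^{1/2} · 72^{1/4} · 108^{1/6} · 216^{1/12} and g = (log₂ 9, log₂ 9, log₂ 6, log₂ ζ, log₂ 54, log₂ 54, log₂ 216) ∈ ℝ^7. Then 36 < ζ < 81 < 216, and g = (log₂ 4)·e_1 + (log₂ 4)·e_2 + (log₂(216/ζ))·e_3 + (log₂(81/ζ))·e_{12} + (log₂(ζ/36))·e_{123'}, where all five coefficients are nonnegative; hence g is a nonnegative linear combination of e_1, e_2, e_3, e_{12}, e_{123'}. -/

import Mathlib

/-!
Raising to the twelfth power, `ζ¹² = 54⁶ · 72³ · 108² · 216`, so `36 < ζ < 81` is a comparison of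
integers. For the vector identity, split `log₂ (a / ζ)` and `log₂ (ζ / 36)` into differences and
factor every integer as `2ᵃ 3ᵇ`: each coordinate becomes an identity linear in `log₂ 3` and
`log₂ ζ`, in which `log₂ ζ` cancels on both sides.
-/

open Finset

noncomputable def pr {N : ℕ} (p : Fin N → ℝ) {A : Type} [DecidableEq A]
    (X : Fin N → A) (a : A) : ℝ :=
  ∑ ω, if X ω = a then p ω else 0

/-- Base-2 Shannon entropy of the random variable `X` under the pmf `p`. -/
noncomputable def ent {N : ℕ} (p : Fin N → ℝ) {A : Type} [Fintype A] [DecidableEq A]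
    (X : Fin N → A) : ℝ :=
  -∑ a, pr p X a * Real.logb 2 (pr p X a)

/-- `p` is a probability mass function. -/
def IsDist {N : ℕ} (p : Fin N → ℝ) : Prop :=
  (∀ ω, 0 ≤ p ω) ∧ ∑ ω, p ω = 1

/-- The entropy vector of three finite-alphabet random variables, with components
(H(X₁), H(X₂), H(X₃), H(X₁X₂), H(X₁X₃), H(X₂X₃), H(X₁X₂X₃)). -/
noncomputable def entVec3 {N a₁ a₂ a₃ : ℕ} (p : Fin N → ℝ)
    (X₁ : Fin N → Fin a₁) (X₂ : Fin N → Fin a₂) (X₃ : Fin N → Fin a₃) : Fin 7 → ℝ :=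
  ![ent p X₁, ent p X₂, ent p X₃,
    ent p (fun ω => (X₁ ω, X₂ ω)),
    ent p (fun ω => (X₁ ω, X₃ ω)),
    ent p (fun ω => (X₂ ω, X₃ ω)),
    ent p (fun ω => (X₁ ω, X₂ ω, X₃ ω))]

/-- `h ∈ ℝ⁷` is the entropy vector of some triple of finite-alphabet random variables. -/
def IsEntropic (h : Fin 7 → ℝ) : Prop :=
  ∃ (N a₁ a₂ a₃ : ℕ) (p : Fin N → ℝ)
    (X₁ : Fin N → Fin a₁) (X₂ : Fin N → Fin a₂) (X₃ : Fin N → Fin a₃),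
    IsDist p ∧ entVec3 p X₁ X₂ X₃ = h

noncomputable def e1 : Fin 7 → ℝ := ![1,0,0,1,1,0,1]
noncomputable def e2 : Fin 7 → ℝ := ![0,1,0,1,0,1,1]
noncomputable def e3 : Fin 7 → ℝ := ![0,0,1,0,1,1,1]
noncomputable def e12 : Fin 7 → ℝ := ![1,1,0,1,1,1,1]
noncomputable def e13 : Fin 7 → ℝ := ![1,0,1,1,1,1,1]
noncomputable def e23 : Fin 7 → ℝ := ![0,1,1,1,1,1,1]
noncomputable def e123 : Fin 7 → ℝ := ![1,1,1,1,1,1,1]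
noncomputable def e123' : Fin 7 → ℝ := ![1,1,1,2,2,2,2]

noncomputable def zeta : ℝ :=
  (54:ℝ) ^ ((1:ℝ)/2) * (72:ℝ) ^ ((1:ℝ)/4) * (108:ℝ) ^ ((1:ℝ)/6) * (216:ℝ) ^ ((1:ℝ)/12)

noncomputable def g : Fin 7 → ℝ :=
  ![Real.logb 2 9, Real.logb 2 9, Real.logb 2 6, Real.logb 2 zeta,
    Real.logb 2 54, Real.logb 2 54, Real.logb 2 216]

lemma zeta_pos : 0 < zeta := by unfold zeta; positivity

lemma rpow_one_div_pow_mul {x : ℝ} (hx : 0 ≤ x) {n : ℕ} (hn : n ≠ 0) (k : ℕ) :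
    (x ^ ((1 : ℝ) / n)) ^ (n * k) = x ^ k := by
  rw [pow_mul, one_div, Real.rpow_inv_natCast_pow hx hn]

lemma zeta_pow_twelve : zeta ^ 12 = 54 ^ 6 * 72 ^ 3 * 108 ^ 2 * 216 := by
  have h54 := rpow_one_div_pow_mul (x := 54) (n := 2) (by norm_num) (by norm_num) 6
  have h72 := rpow_one_div_pow_mul (x := 72) (n := 4) (by norm_num) (by norm_num) 3
  have h108 := rpow_one_div_pow_mul (x := 108) (n := 6) (by norm_num) (by norm_num) 2
  have h216 := rpow_one_div_pow_mul (x := 216) (n := 12) (by norm_num) (by norm_num) 1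
  simp only [Nat.cast_ofNat, Nat.reduceMul, pow_one] at h54 h72 h108 h216
  rw [zeta, mul_pow, mul_pow, mul_pow, h54, h72, h108, h216]

lemma thirty_six_lt_zeta : (36 : ℝ) < zeta :=
  lt_of_pow_lt_pow_left₀ 12 zeta_pos.le (by rw [zeta_pow_twelve]; norm_num)

lemma zeta_lt_eighty_one : zeta < 81 :=
  lt_of_pow_lt_pow_left₀ 12 (by norm_num) (by rw [zeta_pow_twelve]; norm_num)

lemma logb_two_eq_of_eq_two_pow_mul_three_pow {x : ℝ} (a b : ℕ) (hx : x = 2 ^ a * 3 ^ b) :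
    Real.logb 2 x = a + b * Real.logb 2 3 := by
  rw [hx, Real.logb_mul (by positivity) (by positivity), Real.logb_pow, Real.logb_pow,
    Real.logb_self_eq_one one_lt_two, mul_one]

lemma g_eq_combination :
    g = Real.logb 2 4 • e1 + Real.logb 2 4 • e2 + Real.logb 2 (216/zeta) • e3 +
        Real.logb 2 (81/zeta) • e12 + Real.logb 2 (zeta/36) • e123' := by
  set t := Real.logb 2 3
  have h4 : Real.logb 2 4 = 2 := by
    simpa using logb_two_eq_of_eq_two_pow_mul_three_pow (x := 4) 2 0 (by norm_num)
  have h6 : Real.logb 2 6 = 1 + t := by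
    simpa using logb_two_eq_of_eq_two_pow_mul_three_pow (x := 6) 1 1 (by norm_num)
  have h9 : Real.logb 2 9 = 2 * t := by
    simpa using logb_two_eq_of_eq_two_pow_mul_three_pow (x := 9) 0 2 (by norm_num)
  have h36 : Real.logb 2 36 = 2 + 2 * t := by
    simpa using logb_two_eq_of_eq_two_pow_mul_three_pow (x := 36) 2 2 (by norm_num)
  have h54 : Real.logb 2 54 = 1 + 3 * t := by
    simpa using logb_two_eq_of_eq_two_pow_mul_three_pow (x := 54) 1 3 (by norm_num)
  have h81 : Real.logb 2 81 = 4 * t := by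
    simpa using logb_two_eq_of_eq_two_pow_mul_three_pow (x := 81) 0 4 (by norm_num)
  have h216 : Real.logb 2 216 = 3 + 3 * t := by
    simpa using logb_two_eq_of_eq_two_pow_mul_three_pow (x := 216) 3 3 (by norm_num)
  have hz := zeta_pos.ne'
  rw [Real.logb_div (by norm_num) hz, Real.logb_div (by norm_num) hz,
    Real.logb_div hz (by norm_num)]
  simp only [g, e1, e2, e3, e12, e123', h4, h6, h9, h36, h54, h81, h216, Matrix.smul_cons,
    smul_eq_mul, Matrix.smul_empty, Matrix.add_cons, Matrix.head_cons, Matrix.tail_cons,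
    Matrix.empty_add_empty, Matrix.vecCons_inj, and_true]
  refine ⟨?_, ?_, ?_, ?_, ?_, ?_, ?_⟩ <;> ring

/-- 36 < ζ < 81 < 216, and g is the nonnegative combination
(log₂4)e₁+(log₂4)e₂+(log₂(216/ζ))e₃+(log₂(81/ζ))e₁₂+(log₂(ζ/36))e₁₂₃'. -/
theorem stmt12 :
    (36:ℝ) < zeta ∧ zeta < 81 ∧ (81:ℝ) < 216 ∧
    0 ≤ Real.logb 2 4 ∧ 0 ≤ Real.logb 2 (216/zeta) ∧
    0 ≤ Real.logb 2 (81/zeta) ∧ 0 ≤ Real.logb 2 (zeta/36) ∧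
    g = Real.logb 2 4 • e1 + Real.logb 2 4 • e2 + Real.logb 2 (216/zeta) • e3 +
        Real.logb 2 (81/zeta) • e12 + Real.logb 2 (zeta/36) • e123' := by
  have h36 := thirty_six_lt_zeta
  have h81 := zeta_lt_eighty_one
  have logb_nonneg_of_le {x y : ℝ} (hx : 0 < x) (hxy : x ≤ y) : 0 ≤ Real.logb 2 (y / x) :=
    Real.logb_nonneg one_lt_two ((one_le_div hx).mpr hxy)
  refine ⟨h36, h81, by norm_num, Real.logb_nonneg one_lt_two (by norm_num),
    logb_nonneg_of_le zeta_pos (by linarith), logb_nonneg_of_le zeta_pos h81.le,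
    logb_nonneg_of_le (by norm_num) h36.le, g_eq_combination⟩
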